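/- Intertwining identity for the extremal integral-transform kernel: Fix M > 0 and parameters s ∈ ℝ, α, β, γ, L ∈ ℂ, and set A := −2γ/M. Then for all x, r ∈ ℝ, the kernel K(x, r) := exp(A(x−M)(r−M)) satisfies 𝒯̃_x K(x, r) = 𝒯_r K(x, r), where 𝒯̃_x acts on K as a function of x (with r fixed) and 𝒯_r acts on K as a function of r (with x fixed). -/

import Mathlib

open Real Complex Filter Set MeasureTheory

noncomputable section

/-!
Along each variable the kernel is an exponential `exp (c (t − M))`, on which a second-order
operator with polynomial coefficients acts by multiplication with its symbol evaluated at `c`.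
For `𝒯̃_x` take `c = A(r−M)`, for `𝒯_r` take `c = A(x−M)`; the two symbols, as polynomials in
`x − M` and `r − M`, then differ by a multiple of `AM + 2γ`, which vanishes.
-/

/-- The double confluent Heun operator
`𝒯_r = (r−M)² d²/dr² + 2[(α−s+1)(r−M) − β + γ(r−M)²] d/dr
  + (α − 2s − 2sα − L) + 2γ(1−2s)(r−M)`. -/
def THeun (M s : ℝ) (α β γ L : ℂ) (f : ℝ → ℂ) (r : ℝ) : ℂ :=
  ((r : ℂ) - (M : ℂ)) ^ 2 * deriv (deriv f) r
    + 2 * ((α - (s : ℂ) + 1) * ((r : ℂ) - (M : ℂ)) - β + γ * ((r : ℂ) - (M : ℂ)) ^ 2) *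
      deriv f r
    + (α - 2 * (s : ℂ) - 2 * (s : ℂ) * α - L
        + 2 * γ * (1 - 2 * (s : ℂ)) * ((r : ℂ) - (M : ℂ))) * f r

/-- The transformed (reduced confluent Heun) operator
`𝒯̃_x = (x−2M)(x−M) d²/dx² + [(2α+1)(x−M) + (1−2s)(x−2M)] d/dx
  + (α(1−2s) − 2s − L) + (4βγ/M)(x−M)`. -/
def TtildeHeun (M s : ℝ) (α β γ L : ℂ) (f : ℝ → ℂ) (x : ℝ) : ℂ :=
  ((x : ℂ) - 2 * (M : ℂ)) * ((x : ℂ) - (M : ℂ)) * deriv (deriv f) x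
    + ((2 * α + 1) * ((x : ℂ) - (M : ℂ)) + (1 - 2 * (s : ℂ)) * ((x : ℂ) - 2 * (M : ℂ))) *
      deriv f x
    + (α * (1 - 2 * (s : ℂ)) - 2 * (s : ℂ) - L
        + 4 * β * γ / (M : ℂ) * ((x : ℂ) - (M : ℂ))) * f x

theorem hasDerivAt_cexp_mul_sub (c m : ℂ) (t : ℝ) :
    HasDerivAt (fun t : ℝ => cexp (c * ((t : ℂ) - m))) (c * cexp (c * ((t : ℂ) - m))) t := by
  have hlin : HasDerivAt (fun t : ℝ => c * ((t : ℂ) - m)) c t := by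
    simpa using (ofRealCLM.hasDerivAt (x := t)).sub_const m |>.const_mul c
  simpa [mul_comm] using hlin.cexp

theorem deriv_cexp_mul_sub (c m : ℂ) :
    deriv (fun t : ℝ => cexp (c * ((t : ℂ) - m))) =
      fun t : ℝ => c * cexp (c * ((t : ℂ) - m)) :=
  funext fun t => (hasDerivAt_cexp_mul_sub c m t).deriv

theorem deriv_deriv_cexp_mul_sub (c m : ℂ) :
    deriv (deriv fun t : ℝ => cexp (c * ((t : ℂ) - m))) =
      fun t : ℝ => c ^ 2 * cexp (c * ((t : ℂ) - m)) := by
  funext t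
  rw [deriv_cexp_mul_sub, ((hasDerivAt_cexp_mul_sub c m t).const_mul c).deriv, sq, mul_assoc]

theorem THeun_cexp_mul_sub (M s : ℝ) (α β γ L c : ℂ) (r : ℝ) :
    THeun M s α β γ L (fun t : ℝ => cexp (c * ((t : ℂ) - M))) r =
      (((r : ℂ) - M) ^ 2 * c ^ 2
        + 2 * ((α - s + 1) * ((r : ℂ) - M) - β + γ * ((r : ℂ) - M) ^ 2) * c
        + (α - 2 * s - 2 * s * α - L + 2 * γ * (1 - 2 * s) * ((r : ℂ) - M)))
        * cexp (c * ((r : ℂ) - M)) := by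
  rw [THeun, deriv_deriv_cexp_mul_sub, deriv_cexp_mul_sub]
  ring

theorem TtildeHeun_cexp_mul_sub (M s : ℝ) (α β γ L c : ℂ) (x : ℝ) :
    TtildeHeun M s α β γ L (fun t : ℝ => cexp (c * ((t : ℂ) - M))) x =
      (((x : ℂ) - 2 * M) * ((x : ℂ) - M) * c ^ 2
        + ((2 * α + 1) * ((x : ℂ) - M) + (1 - 2 * s) * ((x : ℂ) - 2 * M)) * c
        + (α * (1 - 2 * s) - 2 * s - L + 4 * β * γ / M * ((x : ℂ) - M)))
        * cexp (c * ((x : ℂ) - M)) := by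
  rw [TtildeHeun, deriv_deriv_cexp_mul_sub, deriv_cexp_mul_sub]
  ring

/-- **Intertwining identity for the extremal integral-transform kernel**: with
`A = −2γ/M`, the kernel `K(x, r) = exp(A(x−M)(r−M))` satisfies
`𝒯̃_x K(x, r) = 𝒯_r K(x, r)` for all real `x`, `r`. -/
theorem kernel_intertwining_extremal
    (M : ℝ) (hM : 0 < M) (s : ℝ) (α β γ L : ℂ) :
    ∀ x r : ℝ,
      TtildeHeun M s α β γ L
          (fun x' : ℝ => Complex.exp (-2 * γ / (M : ℂ) * ((x' : ℂ) - (M : ℂ)) * ((r : ℂ) - (M : ℂ)))) x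
        = THeun M s α β γ L
            (fun r' : ℝ => Complex.exp (-2 * γ / (M : ℂ) * ((x : ℂ) - (M : ℂ)) * ((r' : ℂ) - (M : ℂ)))) r := by
  intro x r
  have hM₀ : (M : ℂ) ≠ 0 := ofReal_ne_zero.mpr hM.ne'
  set A : ℂ := -2 * γ / M with hA_def
  have hA : A * M = -2 * γ := div_mul_cancel₀ _ hM₀
  have hβγ : 4 * β * γ / M = -2 * β * A := by rw [hA_def]; ring
  clear_value A
  have hK : (fun x' : ℝ => cexp (A * ((x' : ℂ) - M) * ((r : ℂ) - M))) =
      fun x' : ℝ => cexp (A * ((r : ℂ) - M) * ((x' : ℂ) - M)) :=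
    funext fun x' => by rw [mul_right_comm]
  rw [hK, TtildeHeun_cexp_mul_sub, THeun_cexp_mul_sub, hβγ,
    mul_right_comm A]
  congr 1
  linear_combination (-A * ((x : ℂ) - M) * ((r : ℂ) - M) ^ 2 - (1 - 2 * (s : ℂ)) * ((r : ℂ) - M)) * hA
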